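/- Consider the reduced single-slot MCSP instance built from a monotone 3-SAT formula F with N clauses and M variables (with content size s > 0, AoI cost f > 0, user download cost α and server update cost β satisfying α > β > 0). Then the total cost of every caching decision is at least M·β·s + 2·M·f + M·α·s + N·f, and this lower bound is attained by some caching decision if and only if the formula F is satisfiable. -/

import Mathlib

/-- The two contents A and B of the reduction. -/
inductive Content : Type
  | A : Content
  | B : Content
  deriving DecidableEq

instance instFintypeContent : Fintype Content :=
  ⟨{Content.A, Content.B}, fun x => by cases x <;> simp⟩

/-- A monotone 3-SAT clause over variables `v₁,…,v_M` (indexed by `Fin M`):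
a nonempty set of at most three variables, all negated (`pos = false`, a negative
clause) or all non-negated (`pos = true`, a positive clause). -/
structure MClause (M : ℕ) : Type where
  pos : Bool
  vars : Finset (Fin M)
  nonempty : vars.Nonempty
  card_le : vars.card ≤ 3

/-- The content requested by the primary request of a clause: `A` for a negative
clause, `B` for a positive clause. -/
def reqContent {M : ℕ} (C : MClause M) : Content :=
  if C.pos then Content.B else Content.A

open Classical in
/-- Total cost of the caching decision `σ` in the reduced single-slot MCSP instance
built from the monotone 3-SAT formula `F` (with `M` cache servers, one per variable,
and `N` primary requests, one per clause):
* each cached content incurs update cost `β·s`;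
* each of the two auxiliary single-choice requests of each server (one for `A`, one
  for `B`, candidate = that server only) incurs AoI cost `f` if its content is cached
  there, and cloud cost `f + α·s` otherwise;
* the primary request of clause `C_k` (for content `reqContent (F k)`, candidates =
  the servers of the variables of `C_k`) incurs `f` if some candidate server caches
  the requested content, and `f + α·s` otherwise. -/
noncomputable def totalCost (M N : ℕ) (s f α β : ℝ)
    (F : Fin N → MClause M) (σ : Fin M → Finset Content) : ℝ :=
  (∑ h : Fin M, ((σ h).card : ℝ) * (β * s))
    + (∑ h : Fin M, ∑ c : Content, if c ∈ σ h then f else f + α * s)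
    + (∑ k : Fin N, if ∃ v ∈ (F k).vars, reqContent (F k) ∈ σ v then f else f + α * s)

/-- The clause `C` is true under the Boolean assignment `a`: a positive clause is true
iff some of its variables is true, a negative clause is true iff some of its variables
is false. -/
def clauseSat {M : ℕ} (a : Fin M → Bool) (C : MClause M) : Prop :=
  ∃ v ∈ C.vars, a v = C.pos

/-!
Each cached content trades the cloud download `α·s` of its auxiliary request for an update
`β·s < α·s`, so under the capacity bound a server together with its two auxiliary requests costs
at least `β·s + 2·f + α·s`, with equality iff it caches exactly one content. Each primary request
costs at least `f`, with equality iff it is served. Hence the bound is attained iff every server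
caches exactly one content and every clause is served; reading "server `v` caches `B`" as
"`v` is true", such decisions are exactly the satisfying assignments of `F`.
-/

open Finset

def Content.ofBool (b : Bool) : Content :=
  if b then Content.B else Content.A

theorem Content.ofBool_injective : Function.Injective Content.ofBool := by
  decide

theorem Content.ofBool_surjective : Function.Surjective Content.ofBool := by
  decide

theorem Content.card_eq_two : Fintype.card Content = 2 :=
  rfl

theorem reqContent_eq_ofBool {M : ℕ} (C : MClause M) : reqContent C = Content.ofBool C.pos :=
  rfl

theorem Finset.sum_eq_card_nsmul_iff_of_le {ι R : Type*} [AddCommMonoid R] [PartialOrder R]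
    [IsOrderedCancelAddMonoid R] {t : Finset ι} {g : ι → R} {c : R} (h : ∀ i ∈ t, c ≤ g i) :
    ∑ i ∈ t, g i = t.card • c ↔ ∀ i ∈ t, g i = c := by
  rw [← sum_const, eq_comm, sum_eq_sum_iff_of_le h]
  exact forall₂_congr fun _ _ => eq_comm

theorem Finset.card_le_one_of_card_mul_le {ι : Type*} {S : Finset ι} {s : ℝ} (hs : 0 < s)
    (hS : (S.card : ℝ) * s ≤ s) : S.card ≤ 1 := by
  exact_mod_cast (mul_le_iff_le_one_left hs).1 hS

namespace MCSP

variable {M N : ℕ} {s f α β : ℝ}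

def serverCost (s f α β : ℝ) (S : Finset Content) : ℝ :=
  S.card * (β * s) + ∑ c : Content, if c ∈ S then f else f + α * s

abbrev clauseServed (σ : Fin M → Finset Content) (C : MClause M) : Prop :=
  ∃ v ∈ C.vars, reqContent C ∈ σ v

def clauseCost (s f α : ℝ) (σ : Fin M → Finset Content) (C : MClause M) : ℝ :=
  if clauseServed σ C then f else f + α * s

theorem totalCost_eq_sum_serverCost_add_sum_clauseCost (F : Fin N → MClause M)
    (σ : Fin M → Finset Content) :
    totalCost M N s f α β F σ =
      ∑ h, serverCost s f α β (σ h) + ∑ k, clauseCost s f α σ (F k) := by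
  simp only [totalCost, serverCost, clauseCost, sum_add_distrib]

theorem serverCost_eq (S : Finset Content) :
    serverCost s f α β S = 2 * (f + α * s) - S.card * ((α - β) * s) := by
  have hterm : ∀ c : Content,
      (if c ∈ S then f else f + α * s) = (f + α * s) - if c ∈ S then α * s else 0 := by
    intro c
    split_ifs <;> ring
  rw [serverCost, sum_congr rfl fun c _ => hterm c, sum_sub_distrib, sum_ite_mem, univ_inter,
    sum_const, sum_const, card_univ, Content.card_eq_two]
  simp only [nsmul_eq_mul]
  ring

theorem serverCost_sub_min (S : Finset Content) :
    serverCost s f α β S - (β * s + 2 * f + α * s) = (1 - S.card) * ((α - β) * s) := by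
  rw [serverCost_eq]
  ring

section

variable (hs : 0 < s) (hαβ : β < α) {S : Finset Content}
include hs hαβ

theorem min_le_serverCost (hS : (S.card : ℝ) * s ≤ s) :
    β * s + 2 * f + α * s ≤ serverCost s f α β S := by
  have hcard : (S.card : ℝ) ≤ 1 := by exact_mod_cast card_le_one_of_card_mul_le hs hS
  rw [← sub_nonneg, serverCost_sub_min]
  exact mul_nonneg (sub_nonneg.2 hcard) (mul_pos (sub_pos.2 hαβ) hs).le

theorem serverCost_eq_min_iff : serverCost s f α β S = β * s + 2 * f + α * s ↔ S.card = 1 := by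
  rw [← sub_eq_zero, serverCost_sub_min, mul_eq_zero,
    or_iff_left (mul_pos (sub_pos.2 hαβ) hs).ne', sub_eq_zero, eq_comm, Nat.cast_eq_one]

end

section

variable (hαs : 0 < α * s) (σ : Fin M → Finset Content) (C : MClause M)
include hαs

theorem le_clauseCost : f ≤ clauseCost s f α σ C := by
  unfold clauseCost
  split_ifs <;> linarith

theorem clauseCost_eq_iff : clauseCost s f α σ C = f ↔ clauseServed σ C := by
  unfold clauseCost
  split_ifs with h
  · exact iff_of_true rfl h
  · exact iff_of_false (by simpa using hαs.ne') h

end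

theorem lowerBound_eq (M N : ℕ) (s f α β : ℝ) :
    (M * β * s + 2 * M * f + M * α * s + N * f : ℝ) =
      (univ : Finset (Fin M)).card • (β * s + 2 * f + α * s) +
        (univ : Finset (Fin N)).card • f := by
  simp only [card_univ, Fintype.card_fin, nsmul_eq_mul]
  ring

section

variable (hs : 0 < s) (hβ : 0 < β) (hαβ : β < α) {σ : Fin M → Finset Content}
  (hσ : ∀ h, ((σ h).card : ℝ) * s ≤ s)

include hs hαβ hσ in
theorem card_nsmul_min_le_sum_serverCost :
    (univ : Finset (Fin M)).card • (β * s + 2 * f + α * s) ≤ ∑ h, serverCost s f α β (σ h) :=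
  card_nsmul_le_sum _ _ _ fun h _ => min_le_serverCost hs hαβ (hσ h)

include hs hβ hαβ in
theorem card_nsmul_le_sum_clauseCost (F : Fin N → MClause M) :
    (univ : Finset (Fin N)).card • f ≤ ∑ k, clauseCost s f α σ (F k) :=
  card_nsmul_le_sum _ _ _ fun k _ => le_clauseCost (mul_pos (hβ.trans hαβ) hs) σ (F k)

variable (F : Fin N → MClause M)
include hs hβ hαβ hσ

theorem lowerBound_le_totalCost :
    M * β * s + 2 * M * f + M * α * s + N * f ≤ totalCost M N s f α β F σ := by
  rw [totalCost_eq_sum_serverCost_add_sum_clauseCost, lowerBound_eq]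
  exact add_le_add (card_nsmul_min_le_sum_serverCost hs hαβ hσ)
    (card_nsmul_le_sum_clauseCost hs hβ hαβ F)

theorem totalCost_eq_lowerBound_iff :
    totalCost M N s f α β F σ = M * β * s + 2 * M * f + M * α * s + N * f ↔
      (∀ h, (σ h).card = 1) ∧ ∀ k, clauseServed σ (F k) := by
  have hαs : 0 < α * s := mul_pos (hβ.trans hαβ) hs
  rw [totalCost_eq_sum_serverCost_add_sum_clauseCost, lowerBound_eq, eq_comm,
    add_eq_add_iff_eq_and_eq (card_nsmul_min_le_sum_serverCost hs hαβ hσ)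
      (card_nsmul_le_sum_clauseCost hs hβ hαβ F), eq_comm, eq_comm (a := _ • f),
    sum_eq_card_nsmul_iff_of_le fun h _ => min_le_serverCost hs hαβ (hσ h),
    sum_eq_card_nsmul_iff_of_le fun k _ => le_clauseCost hαs σ (F k)]
  simp only [mem_univ, true_implies, serverCost_eq_min_iff hs hαβ, clauseCost_eq_iff hαs]

end

theorem clauseServed_ofBool_iff (a : Fin M → Bool) (C : MClause M) :
    clauseServed (fun v => {Content.ofBool (a v)}) C ↔ clauseSat a C := by
  simp only [clauseServed, clauseSat, reqContent_eq_ofBool, mem_singleton,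
    Content.ofBool_injective.eq_iff, eq_comm]

theorem exists_card_eq_one_clauseServed_iff (F : Fin N → MClause M) :
    (∃ σ : Fin M → Finset Content, (∀ h, (σ h).card = 1) ∧ ∀ k, clauseServed σ (F k)) ↔
      ∃ a : Fin M → Bool, ∀ k, clauseSat a (F k) := by
  constructor
  · rintro ⟨σ, hcard, hserved⟩
    have hsingle : ∀ h, ∃ b, σ h = {Content.ofBool b} := fun h => by
      obtain ⟨c, hc⟩ := card_eq_one.1 (hcard h)
      obtain ⟨b, rfl⟩ := Content.ofBool_surjective c
      exact ⟨b, hc⟩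
    choose a ha using hsingle
    obtain rfl : σ = fun v => {Content.ofBool (a v)} := funext ha
    exact ⟨a, fun k => (clauseServed_ofBool_iff a (F k)).1 (hserved k)⟩
  · rintro ⟨a, ha⟩
    exact ⟨fun v => {Content.ofBool (a v)}, fun _ => card_singleton _,
      fun k => (clauseServed_ofBool_iff a (F k)).2 (ha k)⟩

end MCSP

open MCSP in
theorem stmt_6_general (M N : ℕ) (s f α β : ℝ)
    (hs : 0 < s) (hβ : 0 < β) (hαβ : β < α)
    (F : Fin N → MClause M) :
    (∀ σ : Fin M → Finset Content, (∀ h : Fin M, ((σ h).card : ℝ) * s ≤ s) →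
      M * β * s + 2 * M * f + M * α * s + N * f ≤ totalCost M N s f α β F σ) ∧
    ((∃ σ : Fin M → Finset Content, (∀ h : Fin M, ((σ h).card : ℝ) * s ≤ s) ∧
        totalCost M N s f α β F σ = M * β * s + 2 * M * f + M * α * s + N * f) ↔
      (∃ a : Fin M → Bool, ∀ k : Fin N, clauseSat a (F k))) := by
  refine ⟨fun σ hσ => lowerBound_le_totalCost hs hβ hαβ hσ F, ?_⟩
  rw [← exists_card_eq_one_clauseServed_iff]
  constructor
  · rintro ⟨σ, hσ, hcost⟩
    exact ⟨σ, (totalCost_eq_lowerBound_iff hs hβ hαβ hσ F).1 hcost⟩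
  · rintro ⟨σ, hcard, hserved⟩
    have hσ : ∀ h, ((σ h).card : ℝ) * s ≤ s := fun h => by simp [hcard h]
    exact ⟨σ, hσ, (totalCost_eq_lowerBound_iff hs hβ hαβ hσ F).2 ⟨hcard, hserved⟩⟩

/-- In the reduced single-slot MCSP instance built from a monotone
3-SAT formula `F` with `N` clauses and `M` variables (content size `s > 0`, AoI cost
`f > 0`, user download cost `α` and server update cost `β` with `α > β > 0`):
the total cost of every caching decision (each server caching a set of contents of
total size at most `s`) is at least `M·β·s + 2·M·f + M·α·s + N·f`, and this lower
bound is attained by some caching decision if and only if `F` is satisfiable. -/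
theorem stmt_6 (M N : ℕ) (s f α β : ℝ)
    (hs : 0 < s) (hf : 0 < f) (hβ : 0 < β) (hαβ : β < α)
    (F : Fin N → MClause M) :
    (∀ σ : Fin M → Finset Content, (∀ h : Fin M, ((σ h).card : ℝ) * s ≤ s) →
      M * β * s + 2 * M * f + M * α * s + N * f ≤ totalCost M N s f α β F σ) ∧
    ((∃ σ : Fin M → Finset Content, (∀ h : Fin M, ((σ h).card : ℝ) * s ≤ s) ∧
        totalCost M N s f α β F σ = M * β * s + 2 * M * f + M * α * s + N * f) ↔
      (∃ a : Fin M → Bool, ∀ k : Fin N, clauseSat a (F k))) :=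
  stmt_6_general M N s f α β hs hβ hαβ F
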